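/- arXiv:2503.19487 — 5 statements merged into one kernel-verified Lean document; each statement's English description precedes it below -/
import Mathlib

section
/- (Inverse inequality, Lemma 3.1a.) For every natural number k there exists a positive constant C_i, depending only on k, such that for every h > 0 and every real polynomial p of degree at most k, ∫₀^h (p'(x))² dx ≤ C_i h^{-2} ∫₀^h (p(x))² dx. -/
open Polynomial MeasureTheory

noncomputable section Aux

variable (k : ℕ)

/-- eval of polynomial with coefficient vector c -/
def Qf (c : Fin (k+1) → ℝ) (x : ℝ) : ℝ := ∑ i : Fin (k+1), c i * x ^ (i : ℕ)

def Df (c : Fin (k+1) → ℝ) (x : ℝ) : ℝ := ∑ i : Fin (k+1), c i * (i : ℕ) * x ^ ((i : ℕ) - 1)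

lemma contQ : Continuous (Function.uncurry (Qf k)) := by
  unfold Qf Function.uncurry
  fun_prop

lemma contD : Continuous (Function.uncurry (Df k)) := by
  unfold Df Function.uncurry
  fun_prop

lemma Qf_eval (p : Polynomial ℝ) (hp : p.natDegree < k + 1) (x : ℝ) :
    p.eval x = Qf k (fun i => p.coeff i) x := by
  rw [Polynomial.eval_eq_sum_range' hp, Qf, Finset.sum_range fun i => p.coeff i * x ^ i]

lemma Df_eval (p : Polynomial ℝ) (hp : p.natDegree < k + 1) (x : ℝ) :
    (derivative p).eval x = Df k (fun i => p.coeff i) x := by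
  conv_lhs => rw [Polynomial.as_sum_range' p (k+1) hp]
  rw [derivative_sum]
  simp only [Polynomial.eval_finset_sum]
  rw [Df, ← Finset.sum_range fun i => p.coeff i * (i:ℝ) * x ^ (i - 1)]
  refine Finset.sum_congr rfl fun i _ => ?_
  rw [← Polynomial.C_mul_X_pow_eq_monomial, derivative_C_mul, derivative_X_pow]
  simp [mul_assoc]

end Aux

noncomputable section Aux2
variable (k : ℕ)

def Pc (c : Fin (k+1) → ℝ) : Polynomial ℝ := ∑ i : Fin (k+1), Polynomial.C (c i) * X ^ (i:ℕ)

lemma Pc_coeff (c : Fin (k+1) → ℝ) (i : Fin (k+1)) : (Pc k c).coeff i = c i := by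
  rw [Pc, Polynomial.finset_sum_coeff]
  rw [Finset.sum_eq_single i]
  · simp
  · intro j _ hj
    rw [Polynomial.coeff_C_mul, Polynomial.coeff_X_pow, if_neg (by simpa using fun hh => hj (Fin.ext hh.symm))]
    simp
  · simp

lemma Pc_eval (c : Fin (k+1) → ℝ) (x : ℝ) : (Pc k c).eval x = Qf k c x := by
  simp [Pc, Qf, Polynomial.eval_finset_sum]

lemma g_pos (c : Fin (k+1) → ℝ) (hc : c ≠ 0) :
    0 < ∫ x in (0:ℝ)..1, Qf k c x ^ 2 := by
  have hP : Pc k c ≠ 0 := by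
    intro h
    apply hc
    funext i
    rw [← Pc_coeff k c i, h]; simp
  have hcont : Continuous fun x : ℝ => Qf k c x ^ 2 := by
    unfold Qf; fun_prop
  rw [intervalIntegral.integral_of_le (by norm_num : (0:ℝ) ≤ 1)]
  rw [MeasureTheory.setIntegral_pos_iff_support_of_nonneg_ae
    (Filter.Eventually.of_forall fun x => sq_nonneg _)
    (hcont.integrableOn_Ioc)]
  have hsub : Set.Ioc (0:ℝ) 1 \ ((Pc k c).roots.toFinset : Set ℝ) ⊆
      Function.support (fun x => Qf k c x ^ 2) ∩ Set.Ioc 0 1 := by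
    rintro x ⟨hx1, hx2⟩
    refine ⟨?_, hx1⟩
    simp only [Function.mem_support]
    intro h0
    apply hx2
    have : (Pc k c).eval x = 0 := by
      rw [Pc_eval]
      exact pow_eq_zero_iff (n := 2) (by norm_num) |>.mp h0
    simp only [Multiset.mem_toFinset, Finset.coe_sort_coe, Finset.mem_coe]
    exact (Polynomial.mem_roots hP).mpr this
  have hroots : MeasureTheory.volume (((Pc k c).roots.toFinset : Set ℝ)) = 0 :=
    (Finset.finite_toSet _).measure_zero _
  have h1 : MeasureTheory.volume (Set.Ioc (0:ℝ) 1 \ ((Pc k c).roots.toFinset : Set ℝ)) =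
      MeasureTheory.volume (Set.Ioc (0:ℝ) 1) :=
    measure_diff_null hroots
  calc (0:ENNReal) < MeasureTheory.volume (Set.Ioc (0:ℝ) 1) := by simp
    _ = _ := h1.symm
    _ ≤ _ := measure_mono hsub

end Aux2

noncomputable section Aux3
variable (k : ℕ)

lemma Qf_smul (t : ℝ) (c : Fin (k+1) → ℝ) (x : ℝ) : Qf k (t • c) x = t * Qf k c x := by
  simp [Qf, Finset.mul_sum, mul_assoc]

lemma Df_smul (t : ℝ) (c : Fin (k+1) → ℝ) (x : ℝ) : Df k (t • c) x = t * Df k c x := by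
  simp [Df, Finset.mul_sum, mul_assoc]

lemma key (k : ℕ) : ∃ C : ℝ, 0 < C ∧ ∀ p : Polynomial ℝ, p.degree ≤ (k : WithBot ℕ) →
    (∫ x in (0:ℝ)..1, ((derivative p).eval x) ^ 2) ≤ C * ∫ x in (0:ℝ)..1, (p.eval x) ^ 2 := by
  set f : (Fin (k+1) → ℝ) → ℝ := fun c => ∫ x in (0:ℝ)..1, Df k c x ^ 2 with hfdef
  set g : (Fin (k+1) → ℝ) → ℝ := fun c => ∫ x in (0:ℝ)..1, Qf k c x ^ 2 with hgdef
  have hfc : Continuous f := by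
    apply intervalIntegral.continuous_parametric_intervalIntegral_of_continuous'
      (f := fun c x => Df k c x ^ 2)
    exact (contD k).pow 2
  have hgc : Continuous g := by
    apply intervalIntegral.continuous_parametric_intervalIntegral_of_continuous'
      (f := fun c x => Qf k c x ^ 2)
    exact (contQ k).pow 2
  have hgnn : ∀ c, 0 ≤ g c := fun c =>
    intervalIntegral.integral_nonneg (by norm_num) (fun x _ => sq_nonneg _)
  have hfsmul : ∀ (t : ℝ) c, f (t • c) = t ^ 2 * f c := by
    intro t c
    simp only [hfdef]
    rw [← intervalIntegral.integral_const_mul]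
    congr 1; funext x; rw [Df_smul]; ring
  have hgsmul : ∀ (t : ℝ) c, g (t • c) = t ^ 2 * g c := by
    intro t c
    simp only [hgdef]
    rw [← intervalIntegral.integral_const_mul]
    congr 1; funext x; rw [Qf_smul]; ring
  -- compact sphere
  have hS : IsCompact (Metric.sphere (0 : Fin (k+1) → ℝ) 1) := isCompact_sphere 0 1
  have hSne : (Metric.sphere (0 : Fin (k+1) → ℝ) 1).Nonempty := by
    refine ⟨Pi.single 0 1, ?_⟩
    simp [mem_sphere_iff_norm, Pi.norm_single]
  obtain ⟨c₀, hc₀S, hmax⟩ := hS.exists_isMaxOn hSne hfc.continuousOn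
  obtain ⟨c₁, hc₁S, hmin⟩ := hS.exists_isMinOn hSne hgc.continuousOn
  have hc₁ne : c₁ ≠ 0 := by
    intro h
    have := mem_sphere_zero_iff_norm.mp hc₁S
    rw [h] at this; simp at this
  have hgc₁ : 0 < g c₁ := g_pos k c₁ hc₁ne
  refine ⟨max (f c₀ / g c₁) 1, lt_of_lt_of_le one_pos (le_max_right _ _), ?_⟩
  intro p hp
  have hdeg : p.natDegree < k + 1 :=
    Nat.lt_succ_of_le (Polynomial.natDegree_le_iff_degree_le.mpr hp)
  set c : Fin (k+1) → ℝ := fun i => p.coeff i with hcdef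
  have hL : (∫ x in (0:ℝ)..1, ((derivative p).eval x) ^ 2) = f c := by
    simp only [hfdef]; congr 1; funext x; rw [Df_eval k p hdeg]
  have hR : (∫ x in (0:ℝ)..1, (p.eval x) ^ 2) = g c := by
    simp only [hgdef]; congr 1; funext x; rw [Qf_eval k p hdeg]
  rw [hL, hR]
  by_cases hc : c = 0
  · rw [hc]
    have h0 : f 0 = 0 := by
      have := hfsmul 0 0; simpa using this
    have g0 : g 0 = 0 := by
      have := hgsmul 0 0; simpa using this
    rw [h0, g0]; simp
  · set t : ℝ := ‖c‖ with htdef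
    have ht : 0 < t := norm_pos_iff.mpr hc
    set c' : Fin (k+1) → ℝ := t⁻¹ • c with hc'def
    have hc'S : c' ∈ Metric.sphere (0 : Fin (k+1) → ℝ) 1 := by
      rw [mem_sphere_zero_iff_norm, hc'def, norm_smul, norm_inv, norm_norm]
      field_simp
    have hceq : c = t • c' := by
      rw [hc'def, smul_smul, mul_inv_cancel₀ ht.ne', one_smul]
    have hCmax : 0 ≤ max (f c₀ / g c₁) 1 := le_trans zero_le_one (le_max_right _ _)
    have step1 : f c ≤ t ^ 2 * f c₀ := by
      rw [hceq, hfsmul]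
      exact mul_le_mul_of_nonneg_left (hmax hc'S) (sq_nonneg t)
    have step2 : f c₀ ≤ max (f c₀ / g c₁) 1 * g c₁ := by
      calc f c₀ = (f c₀ / g c₁) * g c₁ := by field_simp
        _ ≤ max (f c₀ / g c₁) 1 * g c₁ :=
          mul_le_mul_of_nonneg_right (le_max_left _ _) hgc₁.le
    have step3 : g c₁ ≤ g c' := hmin hc'S
    calc f c ≤ t ^ 2 * f c₀ := step1
      _ ≤ t ^ 2 * (max (f c₀ / g c₁) 1 * g c₁) :=
          mul_le_mul_of_nonneg_left step2 (sq_nonneg t)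
      _ ≤ t ^ 2 * (max (f c₀ / g c₁) 1 * g c') :=
          mul_le_mul_of_nonneg_left (mul_le_mul_of_nonneg_left step3 hCmax) (sq_nonneg t)
      _ = max (f c₀ / g c₁) 1 * g c := by
          conv_rhs => rw [hceq, hgsmul]
          ring

end Aux3

/-- **Inverse inequality (Lemma 3.1a).** For every natural number `k` there exists a
positive constant `C` (depending only on `k`) such that for every `h > 0` and every
real polynomial `p` of degree at most `k`,
`∫₀^h (p'(x))² dx ≤ C h⁻² ∫₀^h (p(x))² dx`. -/
theorem inverse_inequality (k : ℕ) :
    ∃ C : ℝ, 0 < C ∧ ∀ h : ℝ, 0 < h → ∀ p : Polynomial ℝ, p.degree ≤ k →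
      (∫ x in (0:ℝ)..h, ((Polynomial.derivative p).eval x) ^ 2)
        ≤ C / h ^ 2 * ∫ x in (0:ℝ)..h, (p.eval x) ^ 2 := by
  obtain ⟨C, hC, hkey⟩ := key k
  refine ⟨C, hC, ?_⟩
  intro h hh p hp
  have hne : h ≠ 0 := hh.ne'
  set q : Polynomial ℝ := p.comp (Polynomial.C h * X) with hqdef
  have hqdeg : q.degree ≤ (k : WithBot ℕ) := by
    rw [← Polynomial.natDegree_le_iff_degree_le, hqdef, Polynomial.natDegree_comp,
      Polynomial.natDegree_C_mul_X _ hne, mul_one]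
    exact Polynomial.natDegree_le_iff_degree_le.mpr hp
  have hqe : ∀ y : ℝ, q.eval y = p.eval (h * y) := by
    intro y; simp [hqdef]
  have hqd : ∀ y : ℝ, (derivative q).eval y = h * (derivative p).eval (h * y) := by
    intro y
    rw [hqdef, Polynomial.derivative_comp]
    simp
  set A : ℝ := ∫ x in (0:ℝ)..h, ((derivative p).eval x) ^ 2 with hA
  set B : ℝ := ∫ x in (0:ℝ)..h, (p.eval x) ^ 2 with hB
  have h1 : (∫ y in (0:ℝ)..1, q.eval y ^ 2) = h⁻¹ * B := by
    have : (fun y => q.eval y ^ 2) = fun y => (fun x => p.eval x ^ 2) (h * y) := by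
      funext y; rw [hqe]
    rw [this, intervalIntegral.integral_comp_mul_left (fun x => p.eval x ^ 2) hne]
    simp [hB, smul_eq_mul]
  have h2 : (∫ y in (0:ℝ)..1, (derivative q).eval y ^ 2) = h * A := by
    have : (fun y => (derivative q).eval y ^ 2)
        = fun y => h ^ 2 * ((fun x => (derivative p).eval x ^ 2) (h * y)) := by
      funext y; rw [hqd]; ring
    rw [this, intervalIntegral.integral_const_mul,
      intervalIntegral.integral_comp_mul_left (fun x => (derivative p).eval x ^ 2) hne]
    simp only [mul_zero, mul_one, smul_eq_mul, ← hA]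
    field_simp
  have hkq := hkey q hqdeg
  rw [h1, h2] at hkq
  -- hkq : h * A ≤ C * (h⁻¹ * B)
  rw [div_mul_eq_mul_div, le_div_iff₀ (by positivity)]
  have e1 : h * (h * A) ≤ h * (C * (h⁻¹ * B)) := mul_le_mul_of_nonneg_left hkq hh.le
  have e2 : h * (C * (h⁻¹ * B)) = C * B := by field_simp
  have e3 : h * (h * A) = A * h ^ 2 := by ring
  linarith
end

section
/- (Trace inverse inequality, Lemma 3.1b.) For every natural number k there exists a positive constant C_t, depending only on k, such that for every h > 0 and every real polynomial p of degree at most k, max{(p(0))², (p(h))²} ≤ C_t h^{-1} ∫₀^h (p(x))² dx. -/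
/-!
For polynomials of degree at most `k` on `[0, 1]`, both `max (p 0 ^ 2) (p 1 ^ 2)` and `∫₀¹ p²` are
continuous, homogeneous of degree two in the coefficient vector of `p`, and the integral vanishes
only at `p = 0`. Their ratio is therefore bounded on the (compact) unit sphere of coefficient
vectors, hence everywhere. The substitution `x ↦ h x` turns the case `h = 1` into the general one,
producing the factor `h⁻¹`.
-/

open Polynomial MeasureTheory

theorem exists_le_mul_of_homogeneous {E : Type*} [NormedAddCommGroup E] [NormedSpace ℝ E]
    [FiniteDimensional ℝ E] [Nontrivial E] {q r : E → ℝ} (hq : Continuous q) (hr : Continuous r)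
    (hq_smul : ∀ (c : ℝ) a, q (c • a) = c ^ 2 * q a) (hr_smul : ∀ (c : ℝ) a, r (c • a) = c ^ 2 * r a)
    (hq_pos : ∀ a ≠ 0, 0 < q a) : ∃ C > 0, ∀ a, r a ≤ C * q a := by
  have hq_sphere : ∀ u ∈ Metric.sphere (0 : E) 1, q u ≠ 0 := fun u hu =>
    (hq_pos u (ne_zero_of_mem_unit_sphere ⟨u, hu⟩)).ne'
  obtain ⟨u₀, -, hmax⟩ := (isCompact_sphere (0 : E) 1).exists_isMaxOn
    (NormedSpace.sphere_nonempty.2 zero_le_one) (hr.continuousOn.div hq.continuousOn hq_sphere)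
  refine ⟨max (r u₀ / q u₀) 1, by positivity, fun a => ?_⟩
  rcases eq_or_ne a 0 with rfl | ha
  · have hr0 : r 0 = 0 := by simpa using hr_smul 0 0
    have hq0 : q 0 = 0 := by simpa using hq_smul 0 0
    simp [hr0, hq0]
  set u := ‖a‖⁻¹ • a
  have hu : u ∈ Metric.sphere (0 : E) 1 := by simp [u, norm_smul, ha]
  have ha_eq : a = ‖a‖ • u := by simp [u, smul_smul, ha]
  have hratio : r a / q a = r u / q u := by
    rw [ha_eq, hr_smul, hq_smul, mul_div_mul_left _ _ (by positivity)]
  rw [← div_le_iff₀ (hq_pos a ha), hratio]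
  exact (hmax hu).trans (le_max_left _ _)

theorem integral_sq_eval_pos {p : ℝ[X]} (hp : p ≠ 0) {a b : ℝ} (hab : a < b) :
    0 < ∫ x in a..b, p.eval x ^ 2 := by
  obtain ⟨c, hc, hroot⟩ := ((Set.Icc_infinite hab).sdiff (p.finite_setOfPred_isRoot hp)).nonempty
  exact intervalIntegral.integral_pos hab (by fun_prop) (fun x _ => sq_nonneg _)
    ⟨c, hc, sq_pos_of_ne_zero hroot⟩

theorem eval_degreeLTEquiv_symm {R : Type*} [Semiring R] {n : ℕ} (a : Fin n → R) (x : R) :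
    ((degreeLTEquiv R n).symm a : R[X]).eval x = ∑ i, a i * x ^ (i : ℕ) := by
  rw [eval_eq_sum_degreeLTEquiv (Submodule.coe_mem _)]
  simp

theorem exists_sq_eval_le_mul_integral_unitInterval (k : ℕ) :
    ∃ C > 0, ∀ p : ℝ[X], p.degree ≤ k →
      max (p.eval 0 ^ 2) (p.eval 1 ^ 2) ≤ C * ∫ x in (0:ℝ)..1, p.eval x ^ 2 := by
  let P : (Fin (k + 1) → ℝ) → ℝ[X] := fun a => (degreeLTEquiv ℝ (k + 1)).symm a
  have hP_smul (c : ℝ) (a) (x : ℝ) : (P (c • a)).eval x ^ 2 = c ^ 2 * (P a).eval x ^ 2 := by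
    simp [P, mul_pow]
  have hP_cont : Continuous fun ax : (Fin (k + 1) → ℝ) × ℝ => (P ax.1).eval ax.2 := by
    simp only [P, eval_degreeLTEquiv_symm]
    fun_prop
  obtain ⟨C, hC, hle⟩ := exists_le_mul_of_homogeneous
    (q := fun a => ∫ x in (0:ℝ)..1, (P a).eval x ^ 2)
    (r := fun a => max ((P a).eval 0 ^ 2) ((P a).eval 1 ^ 2))
    (intervalIntegral.continuous_parametric_intervalIntegral_of_continuous'
      (hP_cont.pow 2) 0 1)
    (by simp only [P, eval_degreeLTEquiv_symm]; fun_prop)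
    (fun c a => by simp only [hP_smul, intervalIntegral.integral_const_mul])
    (fun c a => by simp only [hP_smul, mul_max_of_nonneg _ _ (sq_nonneg c)])
    (fun a ha => integral_sq_eval_pos (by simpa [P] using ha) zero_lt_one)
  refine ⟨C, hC, fun p hp => ?_⟩
  have hp' : p ∈ degreeLT ℝ (k + 1) :=
    mem_degreeLT.2 (hp.trans_lt (by exact_mod_cast k.lt_succ_self))
  simpa [P] using hle (degreeLTEquiv ℝ (k + 1) ⟨p, hp'⟩)

/-- **Trace inverse inequality (Lemma 3.1b).** For every natural number `k` there exists a
positive constant `C` (depending only on `k`) such that for every `h > 0` and every real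
polynomial `p` of degree at most `k`,
`max{(p(0))², (p(h))²} ≤ C h⁻¹ ∫₀^h (p(x))² dx`. -/
theorem trace_inverse_inequality (k : ℕ) :
    ∃ C : ℝ, 0 < C ∧ ∀ h : ℝ, 0 < h → ∀ p : Polynomial ℝ, p.degree ≤ k →
      max ((p.eval 0) ^ 2) ((p.eval h) ^ 2)
        ≤ C / h * ∫ x in (0:ℝ)..h, (p.eval x) ^ 2 := by
  obtain ⟨K, hK, hunit⟩ := exists_sq_eval_le_mul_integral_unitInterval k
  refine ⟨K, hK, fun h hh p hp => ?_⟩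
  have hdeg : (p.comp (C h * X)).degree ≤ k := by
    refine (degree_le_iff_coeff_zero _ _).2 fun m hm => ?_
    rw [comp_C_mul_X_coeff, (degree_le_iff_coeff_zero _ _).1 hp m hm, zero_mul]
  have hint : ∫ x in (0:ℝ)..1, (p.comp (C h * X)).eval x ^ 2
      = h⁻¹ * ∫ x in (0:ℝ)..h, p.eval x ^ 2 := by
    simpa using intervalIntegral.integral_comp_mul_left (fun x => p.eval x ^ 2) hh.ne'
      (a := 0) (b := 1)
  calc max (p.eval 0 ^ 2) (p.eval h ^ 2)
      = max ((p.comp (C h * X)).eval 0 ^ 2) ((p.comp (C h * X)).eval 1 ^ 2) := by simp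
    _ ≤ K * (h⁻¹ * ∫ x in (0:ℝ)..h, p.eval x ^ 2) := hint ▸ hunit _ hdeg
    _ = K / h * ∫ x in (0:ℝ)..h, p.eval x ^ 2 := by ring
end

section
/- (Positivity of the time-relaxed scheme for the even parity.) Let σ : ℝ×ℝ → ℝ be measurable with σ ≥ 0, let μ > 0, and suppose λ(v) = ∫_ℝ σ(v,w)M(w) dw ≤ μ for every v. Let f : ℝ → ℝ be integrable with f ≥ 0, and assume w ↦ σ(v,w)f(w) is integrable for every v. Let τ ∈ [0,1] and set ρ = ∫_ℝ f(w) dw. Then the relaxed update r*(v) = (1−τ)f(v) + τ(1−τ)(Q(f)(v) + μ f(v))/μ + τ² ρ M(v) satisfies r*(v) ≥ 0 for every v ∈ ℝ. -/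
noncomputable section

open MeasureTheory

/-- The one-dimensional normalized Maxwellian `M(v) = (2π)^{-1/2} exp(-v²/2)`. -/
def Mw (v : ℝ) : ℝ := (Real.sqrt (2 * Real.pi))⁻¹ * Real.exp (-(v ^ 2) / 2)

/-- **Positivity of the time-relaxed scheme for the even parity.**
For a measurable nonnegative kernel `σ`, `μ > 0` with collision frequency
`λ(v) = ∫ σ(v,w)M(w) dw ≤ μ` for every `v`, an integrable nonnegative `f` with
`w ↦ σ(v,w)f(w)` integrable for every `v`, `τ ∈ [0,1]` and `ρ = ∫ f`, the relaxed
update `r*(v) = (1−τ)f(v) + τ(1−τ)(Q(f)(v) + μ f(v))/μ + τ² ρ M(v)` is nonnegative. -/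
theorem relaxed_update_nonneg (σ : ℝ → ℝ → ℝ)
    (hσmeas : Measurable (Function.uncurry σ)) (hσnn : ∀ v w, 0 ≤ σ v w)
    (μ : ℝ) (hμ : 0 < μ)
    (hlamint : ∀ v, Integrable (fun w => σ v w * Mw w))
    (hlam : ∀ v, (∫ w : ℝ, σ v w * Mw w) ≤ μ)
    (f : ℝ → ℝ) (hf : Integrable f) (hfnn : ∀ w, 0 ≤ f w)
    (hσf : ∀ v, Integrable (fun w => σ v w * f w))
    (τ : ℝ) (hτ0 : 0 ≤ τ) (hτ1 : τ ≤ 1) :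
    ∀ v : ℝ,
      0 ≤ (1 - τ) * f v
          + τ * (1 - τ) * ((∫ w : ℝ, σ v w * (Mw v * f w - Mw w * f v)) + μ * f v) / μ
          + τ ^ 2 * (∫ w : ℝ, f w) * Mw v := by
  intro v
  have hMnn : ∀ w : ℝ, 0 ≤ Mw w := fun w => by
    unfold Mw
    positivity
  have hsplit : (∫ w : ℝ, σ v w * (Mw v * f w - Mw w * f v))
      = Mw v * (∫ w : ℝ, σ v w * f w) - (∫ w : ℝ, σ v w * Mw w) * f v := by
    have h1 : Integrable (fun w => Mw v * (σ v w * f w)) := (hσf v).const_mul _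
    have h2 : Integrable (fun w => (σ v w * Mw w) * f v) := (hlamint v).mul_const _
    have : (∫ w : ℝ, σ v w * (Mw v * f w - Mw w * f v))
        = ∫ w : ℝ, (Mw v * (σ v w * f w) - (σ v w * Mw w) * f v) := by
      congr 1; ext w; ring
    rw [this, integral_sub h1 h2, integral_const_mul, integral_mul_const]
  have hQ : 0 ≤ (∫ w : ℝ, σ v w * (Mw v * f w - Mw w * f v)) + μ * f v := by
    rw [hsplit]
    have h1 : 0 ≤ Mw v * (∫ w : ℝ, σ v w * f w) :=
      mul_nonneg (hMnn v) (integral_nonneg fun w => mul_nonneg (hσnn v w) (hfnn w))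
    have h2 : (∫ w : ℝ, σ v w * Mw w) * f v ≤ μ * f v :=
      mul_le_mul_of_nonneg_right (hlam v) (hfnn v)
    linarith
  have hρ : 0 ≤ (∫ w : ℝ, f w) := integral_nonneg hfnn
  have h1τ : 0 ≤ 1 - τ := by linarith
  have t1 : 0 ≤ (1 - τ) * f v := mul_nonneg h1τ (hfnn v)
  have t2 : 0 ≤ τ * (1 - τ) * ((∫ w : ℝ, σ v w * (Mw v * f w - Mw w * f v)) + μ * f v) / μ :=
    div_nonneg (mul_nonneg (mul_nonneg hτ0 h1τ) hQ) hμ.le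
  have t3 : 0 ≤ τ ^ 2 * (∫ w : ℝ, f w) * Mw v :=
    mul_nonneg (mul_nonneg (sq_nonneg τ) hρ) (hMnn v)
  linarith
end
end

section
/- (Lemma 4.2, relaxation step is nonexpansive in the weighted norm.) Suppose the scattering kernel is constant, σ(v,w) ≡ λ, with 0 < λ ≤ μ, and let τ ∈ [0,1]. Let rⁿ : Ω_x × ℝ → ℝ be measurable with |||rⁿ||| < ∞ and with rⁿ(x,·) integrable over ℝ for almost every x ∈ Ω_x, and set ρⁿ(x) = ∫_ℝ rⁿ(x,v) dv. Define r*(x,v) = (1−τ) rⁿ(x,v) + τ(1−τ)(λ ρⁿ(x) M(v) + (μ−λ) rⁿ(x,v))/μ + τ² ρⁿ(x) M(v). Then |||r*||| ≤ |||rⁿ|||. -/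
noncomputable section

open MeasureTheory

lemma Mw_pos (v : ℝ) : 0 < Mw v := by
  have h2π : (0:ℝ) < 2 * Real.pi := by positivity
  exact mul_pos (inv_pos.2 (Real.sqrt_pos.2 h2π)) (Real.exp_pos _)

lemma Mw_eq (v : ℝ) : Mw v = (Real.sqrt (2 * Real.pi))⁻¹ * Real.exp (-(1/2) * v ^ 2) := by
  unfold Mw; ring_nf

lemma integrable_Mw : Integrable Mw := by
  simp only [funext Mw_eq]
  exact (integrable_exp_neg_mul_sq (by norm_num : (0:ℝ) < 1/2)).const_mul _

lemma integral_Mw : ∫ v : ℝ, Mw v = 1 := by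
  simp only [funext Mw_eq]
  rw [integral_const_mul, integral_gaussian]
  have : Real.pi / (1/2) = 2 * Real.pi := by ring
  rw [this, inv_mul_cancel₀]
  exact ne_of_gt (Real.sqrt_pos.2 (by positivity))

/-- Per-`x` inequality: convex combination with `ρ M` is nonexpansive in the weighted norm. -/
lemma inner_ineq (lam : ℝ) (hlam : 0 < lam) (c : ℝ) (hc0 : 0 ≤ c) (hc1 : c ≤ 1)
    (f : ℝ → ℝ) (hf : Integrable f)
    (hf2 : Integrable (fun v => f v ^ 2 * (lam / Mw v))) :
    (∫ v : ℝ, ((1 - c) * f v + c * (∫ w : ℝ, f w) * Mw v) ^ 2 * (lam / Mw v))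
      ≤ ∫ v : ℝ, f v ^ 2 * (lam / Mw v) := by
  set ρ : ℝ := ∫ w : ℝ, f w with hρ
  set N : ℝ := ∫ v : ℝ, f v ^ 2 * (lam / Mw v) with hN
  -- integrable pieces
  have hM : Integrable Mw := integrable_Mw
  -- Cauchy-Schwarz via nonnegativity of ∫ (f - ρ M)² λ/M
  have hkey : lam * ρ ^ 2 ≤ N := by
    have hptw : ∀ v : ℝ, (f v - ρ * Mw v) ^ 2 * (lam / Mw v)
        = f v ^ 2 * (lam / Mw v) - 2 * lam * ρ * f v + lam * ρ ^ 2 * Mw v := by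
      intro v
      have hMv := (Mw_pos v).ne'
      field_simp
      ring
    have hnn : 0 ≤ ∫ v : ℝ, (f v - ρ * Mw v) ^ 2 * (lam / Mw v) :=
      integral_nonneg fun v => mul_nonneg (sq_nonneg _)
        (div_nonneg hlam.le (Mw_pos v).le)
    have heq : (∫ v : ℝ, (f v - ρ * Mw v) ^ 2 * (lam / Mw v)) = N - lam * ρ ^ 2 := by
      calc (∫ v : ℝ, (f v - ρ * Mw v) ^ 2 * (lam / Mw v))
          = ∫ v : ℝ, (f v ^ 2 * (lam / Mw v) - 2 * lam * ρ * f v + lam * ρ ^ 2 * Mw v) := by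
            exact integral_congr_ae (Filter.Eventually.of_forall hptw)
        _ = (∫ v : ℝ, (f v ^ 2 * (lam / Mw v) - 2 * lam * ρ * f v))
              + ∫ v : ℝ, lam * ρ ^ 2 * Mw v :=
            integral_add (hf2.sub (hf.const_mul _)) (hM.const_mul _)
        _ = ((∫ v : ℝ, f v ^ 2 * (lam / Mw v)) - ∫ v : ℝ, 2 * lam * ρ * f v)
              + ∫ v : ℝ, lam * ρ ^ 2 * Mw v := by
            rw [integral_sub hf2 (hf.const_mul _)]
        _ = N - 2 * lam * ρ * ρ + lam * ρ ^ 2 * 1 := by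
            rw [integral_const_mul, integral_const_mul, integral_Mw, ← hρ, ← hN]
        _ = N - lam * ρ ^ 2 := by ring
    linarith [heq ▸ hnn]
  -- expand the left-hand side
  have hptw2 : ∀ v : ℝ, ((1 - c) * f v + c * ρ * Mw v) ^ 2 * (lam / Mw v)
      = (1 - c) ^ 2 * (f v ^ 2 * (lam / Mw v)) + 2 * (1 - c) * c * lam * ρ * f v
        + c ^ 2 * ρ ^ 2 * lam * Mw v := by
    intro v
    have hMv := (Mw_pos v).ne'
    field_simp
    ring
  have hLHS : (∫ v : ℝ, ((1 - c) * f v + c * ρ * Mw v) ^ 2 * (lam / Mw v))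
      = (1 - c) ^ 2 * N + 2 * (1 - c) * c * lam * ρ ^ 2 + c ^ 2 * ρ ^ 2 * lam := by
    calc (∫ v : ℝ, ((1 - c) * f v + c * ρ * Mw v) ^ 2 * (lam / Mw v))
        = ∫ v : ℝ, ((1 - c) ^ 2 * (f v ^ 2 * (lam / Mw v)) + 2 * (1 - c) * c * lam * ρ * f v
            + c ^ 2 * ρ ^ 2 * lam * Mw v) :=
          integral_congr_ae (Filter.Eventually.of_forall hptw2)
      _ = (∫ v : ℝ, ((1 - c) ^ 2 * (f v ^ 2 * (lam / Mw v)) + 2 * (1 - c) * c * lam * ρ * f v))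
            + ∫ v : ℝ, c ^ 2 * ρ ^ 2 * lam * Mw v :=
          integral_add ((hf2.const_mul _).add (hf.const_mul _)) (hM.const_mul _)
      _ = ((∫ v : ℝ, (1 - c) ^ 2 * (f v ^ 2 * (lam / Mw v)))
            + ∫ v : ℝ, 2 * (1 - c) * c * lam * ρ * f v)
            + ∫ v : ℝ, c ^ 2 * ρ ^ 2 * lam * Mw v := by
          rw [integral_add (hf2.const_mul _) (hf.const_mul _)]
      _ = ((1 - c) ^ 2 * N + 2 * (1 - c) * c * lam * ρ * ρ) + c ^ 2 * ρ ^ 2 * lam * 1 := by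
          rw [integral_const_mul, integral_const_mul, integral_const_mul, integral_Mw, ← hρ, ← hN]
      _ = (1 - c) ^ 2 * N + 2 * (1 - c) * c * lam * ρ ^ 2 + c ^ 2 * ρ ^ 2 * lam := by ring
  rw [hLHS]
  nlinarith [sq_nonneg c, sq_nonneg (1 - c), mul_nonneg hc0 (sub_nonneg.2 hc1)]

/-- **Lemma 4.2: the relaxation step is nonexpansive in the weighted norm.**
For the constant kernel `σ ≡ λ` with `0 < λ ≤ μ` and `τ ∈ [0,1]`, if `rⁿ` is measurable
on `Ω_x × ℝ` (with `Ω_x = [0,1]`) with finite weighted phase-space norm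
`|||rⁿ|||² = ∫_{Ω_x}∫_ℝ rⁿ(x,v)² (λ/M(v)) dv dx` and `rⁿ(x,·)` integrable for a.e. `x`,
then the relaxed update
`r*(x,v) = (1−τ)rⁿ(x,v) + τ(1−τ)(λρⁿ(x)M(v) + (μ−λ)rⁿ(x,v))/μ + τ²ρⁿ(x)M(v)`,
where `ρⁿ(x) = ∫_ℝ rⁿ(x,v) dv`, satisfies `|||r*||| ≤ |||rⁿ|||`. -/
theorem relaxation_nonexpansive (lam μ τ : ℝ) (hlam : 0 < lam) (hlamμ : lam ≤ μ)
    (hτ0 : 0 ≤ τ) (hτ1 : τ ≤ 1)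
    (rn : ℝ → ℝ → ℝ)
    (hmeas : Measurable (Function.uncurry rn))
    (hfin : Integrable (fun p : ℝ × ℝ => (rn p.1 p.2) ^ 2 * (lam / Mw p.2))
      ((volume.restrict (Set.Icc (0:ℝ) 1)).prod volume))
    (hint : ∀ᵐ x ∂(volume.restrict (Set.Icc (0:ℝ) 1)), Integrable (rn x)) :
    Real.sqrt (∫ x in Set.Icc (0:ℝ) 1, ∫ v : ℝ,
        ((1 - τ) * rn x v
            + τ * (1 - τ) * (lam * (∫ w : ℝ, rn x w) * Mw v + (μ - lam) * rn x v) / μ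
            + τ ^ 2 * (∫ w : ℝ, rn x w) * Mw v) ^ 2 * (lam / Mw v))
      ≤ Real.sqrt (∫ x in Set.Icc (0:ℝ) 1, ∫ v : ℝ, (rn x v) ^ 2 * (lam / Mw v)) := by
  have hμ : 0 < μ := lt_of_lt_of_le hlam hlamμ
  set c : ℝ := τ * (1 - τ) * lam / μ + τ ^ 2 with hc
  have hc0 : 0 ≤ c := by
    rw [hc]
    exact add_nonneg (div_nonneg (mul_nonneg (mul_nonneg hτ0 (by linarith)) hlam.le) hμ.le)
      (sq_nonneg τ)
  have hc1 : c ≤ 1 := by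
    rw [hc]
    have h1 : τ * (1 - τ) * lam / μ ≤ τ * (1 - τ) := by
      rw [div_le_iff₀ hμ]
      nlinarith [mul_nonneg hτ0 (sub_nonneg.2 hτ1)]
    nlinarith
  -- rewrite the integrand
  have hform : ∀ x v : ℝ,
      ((1 - τ) * rn x v
          + τ * (1 - τ) * (lam * (∫ w : ℝ, rn x w) * Mw v + (μ - lam) * rn x v) / μ
          + τ ^ 2 * (∫ w : ℝ, rn x w) * Mw v) ^ 2 * (lam / Mw v)
        = ((1 - c) * rn x v + c * (∫ w : ℝ, rn x w) * Mw v) ^ 2 * (lam / Mw v) := by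
    intro x v
    congr 1
    rw [hc]
    field_simp
    ring
  -- a.e. slice integrability
  have hslice := hfin.prod_right_ae
  -- a.e. pointwise inequality between inner integrals
  have hae : ∀ᵐ x ∂(volume.restrict (Set.Icc (0:ℝ) 1)),
      (∫ v : ℝ, ((1 - τ) * rn x v
          + τ * (1 - τ) * (lam * (∫ w : ℝ, rn x w) * Mw v + (μ - lam) * rn x v) / μ
          + τ ^ 2 * (∫ w : ℝ, rn x w) * Mw v) ^ 2 * (lam / Mw v))
        ≤ ∫ v : ℝ, (rn x v) ^ 2 * (lam / Mw v) := by
    filter_upwards [hint, hslice] with x hfx hf2x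
    calc (∫ v : ℝ, ((1 - τ) * rn x v
            + τ * (1 - τ) * (lam * (∫ w : ℝ, rn x w) * Mw v + (μ - lam) * rn x v) / μ
            + τ ^ 2 * (∫ w : ℝ, rn x w) * Mw v) ^ 2 * (lam / Mw v))
        = ∫ v : ℝ, ((1 - c) * rn x v + c * (∫ w : ℝ, rn x w) * Mw v) ^ 2 * (lam / Mw v) :=
          integral_congr_ae (Filter.Eventually.of_forall (hform x))
      _ ≤ ∫ v : ℝ, (rn x v) ^ 2 * (lam / Mw v) :=
          inner_ineq lam hlam c hc0 hc1 (rn x) hfx hf2x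
  -- monotonicity and sqrt
  apply Real.sqrt_le_sqrt
  refine integral_mono_of_nonneg ?_ hfin.integral_prod_left hae
  filter_upwards with x
  exact integral_nonneg fun v => mul_nonneg (sq_nonneg _) (div_nonneg hlam.le (Mw_pos v).le)
end
end

section
/- (Properties of the positivity-preserving limiter.) Let I = [a,b] with a < b, let f : I → ℝ be continuous, let f̄ = (b−a)^{-1} ∫_a^b f(x) dx be its average, and let m = min_{x∈I} f(x). Assume f̄ ≥ 0 and m < f̄. Set θ = min{ f̄/(f̄ − m), 1 } and define f^{new}(x) = θ(f(x) − f̄) + f̄. Then: (i) the average is preserved, (b−a)^{-1} ∫_a^b f^{new}(x) dx = f̄; and (ii) f^{new}(x) ≥ 0 for all x ∈ I. -/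
open MeasureTheory

/-! The rescaling `θ (f - f̄) + f̄` is affine with fixed point `f̄`, so it preserves the average.
Since `0 ≤ θ`, its minimum over `I` is attained where `f = m`, and there it equals
`f̄ - θ (f̄ - m) ≥ 0` by the choice `θ ≤ f̄ / (f̄ - m)`. -/

theorem intervalIntegral_average_affine {f : ℝ → ℝ} {a b : ℝ} (hab : a ≠ b)
    (hf : IntervalIntegrable f volume a b) (θ c : ℝ) :
    (b - a)⁻¹ * ∫ x in a..b, (θ * (f x - c) + c) =
      θ * ((b - a)⁻¹ * (∫ x in a..b, f x) - c) + c := by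
  have hba : b - a ≠ 0 := sub_ne_zero.2 hab.symm
  rw [intervalIntegral.integral_add ((hf.sub intervalIntegrable_const).const_mul θ)
      intervalIntegrable_const, intervalIntegral.integral_const_mul,
    intervalIntegral.integral_sub hf intervalIntegrable_const,
    intervalIntegral.integral_const, smul_eq_mul]
  field_simp

theorem min_div_sub_one_mul_sub_le {c m : ℝ} (hmc : m < c) :
    min (c / (c - m)) 1 * (c - m) ≤ c :=
  calc min (c / (c - m)) 1 * (c - m) ≤ c / (c - m) * (c - m) :=
        mul_le_mul_of_nonneg_right (min_le_left _ _) (sub_pos.2 hmc).le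
    _ = c := div_mul_cancel₀ c (sub_pos.2 hmc).ne'

theorem limiter_nonneg {c m y : ℝ} (hc : 0 ≤ c) (hmc : m < c) (hmy : m ≤ y) :
    0 ≤ min (c / (c - m)) 1 * (y - c) + c := by
  have hθ : 0 ≤ min (c / (c - m)) 1 := le_min (div_nonneg hc (sub_pos.2 hmc).le) zero_le_one
  have hθy := mul_le_mul_of_nonneg_left (sub_le_sub_right hmy c) hθ
  have hθc := min_div_sub_one_mul_sub_le hmc
  linarith

/-- **Properties of the positivity-preserving limiter.**
Let `I = [a,b]` with `a < b`, `f` continuous on `I`, `f̄` its average over `I`, and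
`m = min_{x∈I} f(x)`. Assume `f̄ ≥ 0` and `m < f̄`. With `θ = min{f̄/(f̄ − m), 1}` and
`f^new(x) = θ(f(x) − f̄) + f̄`, (i) the average of `f^new` over `I` equals `f̄`, and
(ii) `f^new(x) ≥ 0` for all `x ∈ I`. -/
theorem positivity_preserving_limiter (a b : ℝ) (hab : a < b)
    (f : ℝ → ℝ) (hf : ContinuousOn f (Set.Icc a b))
    (fbar m θ : ℝ)
    (hfbar : fbar = (b - a)⁻¹ * ∫ x in a..b, f x)
    (hm : IsLeast (f '' Set.Icc a b) m)
    (hfbar0 : 0 ≤ fbar) (hmlt : m < fbar)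
    (hθ : θ = min (fbar / (fbar - m)) 1) :
    (b - a)⁻¹ * (∫ x in a..b, (θ * (f x - fbar) + fbar)) = fbar ∧
    ∀ x ∈ Set.Icc a b, 0 ≤ θ * (f x - fbar) + fbar := by
  refine ⟨?_, fun x hx => hθ ▸ limiter_nonneg hfbar0 hmlt (hm.2 ⟨x, hx, rfl⟩)⟩
  rw [intervalIntegral_average_affine hab.ne (hf.intervalIntegrable_of_Icc hab.le), ← hfbar,
    sub_self, mul_zero, zero_add]
end
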